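/- arXiv:2506.22080 — 4 statements merged into one kernel-verified Lean document; each statement's English description precedes it below -/
import Mathlib

section
/- Let A ⊆ ℝⁿ be convex, f : A × A → ℝ with f(x,·) convex for each x, f(x,x) = 0, and f μ-strongly monotone (f(x,y)+f(y,x) ≤ -μ‖x-y‖²). Then for all x,y ∈ A and all x* ∈ ∂₂f(x,·)(x), y* ∈ ∂₂f(y,·)(y), one has ⟨x* - y*, x - y⟩ ≥ μ‖x-y‖². -/
theorem stmt_3 {n : ℕ} (A : Set (EuclideanSpace ℝ (Fin n))) (hA : Convex ℝ A)
    (f : EuclideanSpace ℝ (Fin n) → EuclideanSpace ℝ (Fin n) → ℝ)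
    (μ : ℝ) (hμ : 0 < μ)
    (hconv : ∀ x ∈ A, ConvexOn ℝ A (f x))
    (hdiag : ∀ x ∈ A, f x x = 0)
    (hsm : ∀ x ∈ A, ∀ y ∈ A, f x y + f y x ≤ -μ * ‖x - y‖ ^ 2)
    (x y : EuclideanSpace ℝ (Fin n)) (hx : x ∈ A) (hy : y ∈ A)
    (xs ys : EuclideanSpace ℝ (Fin n))
    (hxs : ∀ y' ∈ A, f x y' - f x x ≥ (inner ℝ xs (y' - x) : ℝ))
    (hys : ∀ y' ∈ A, f y y' - f y y ≥ (inner ℝ ys (y' - y) : ℝ)) :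
    (inner ℝ (xs - ys) (x - y) : ℝ) ≥ μ * ‖x - y‖ ^ 2 := by
  have h1 := hxs y hy
  have h2 := hys x hx
  have h3 := hsm x hx y hy
  rw [hdiag x hx] at h1
  rw [hdiag y hy] at h2
  have key : (inner ℝ xs (y - x) : ℝ) + inner ℝ ys (x - y) ≤ -μ * ‖x - y‖ ^ 2 := by
    linarith
  have e : (inner ℝ (xs - ys) (x - y) : ℝ)
      = -(inner ℝ xs (y - x) : ℝ) - inner ℝ ys (x - y) := by
    rw [inner_sub_left]
    have : (y - x : EuclideanSpace ℝ (Fin n)) = -(x - y) := by abel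
    rw [this, inner_neg_right]
    ring
  rw [e]
  linarith
end

section
/- Let f : A × A → ℝ be strongly monotone with parameter μ > 0 and Lipschitz-type continuous with constant L > 0 (f(x,y)+f(y,z) ≥ f(x,z) - L‖y-x‖‖z-y‖), with f(x,·) convex and f(x,x)=0. Let D ⊆ A be nonempty closed convex, ȳ the unique solution of EP(f,D), ŷ ∈ D, and w₀ the unique minimizer over D of w ↦ f(ŷ,w) + (L/2)‖w-ŷ‖². Then (μ/(2L))‖ŷ-ȳ‖ ≤ ‖ŷ - w₀‖ ≤ 2‖ŷ - ȳ‖. -/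
set_option maxHeartbeats 1000000 in
theorem stmt_9 {n : ℕ} (A : Set (EuclideanSpace ℝ (Fin n))) (hA : Convex ℝ A)
    (f : EuclideanSpace ℝ (Fin n) → EuclideanSpace ℝ (Fin n) → ℝ)
    (μ L : ℝ) (hμ : 0 < μ) (hL : 0 < L)
    (hcvx : ∀ x ∈ A, ConvexOn ℝ A (f x))
    (hdiag : ∀ x ∈ A, f x x = 0)
    (hsm : ∀ x ∈ A, ∀ y ∈ A, f x y + f y x ≤ -μ * ‖x - y‖ ^ 2)
    (hlip : ∀ x ∈ A, ∀ y ∈ A, ∀ z ∈ A,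
      f x y + f y z ≥ f x z - L * ‖y - x‖ * ‖z - y‖)
    (D : Set (EuclideanSpace ℝ (Fin n))) (hDsub : D ⊆ A)
    (hDne : D.Nonempty) (hDcl : IsClosed D) (hDconv : Convex ℝ D)
    (ybar : EuclideanSpace ℝ (Fin n)) (hybarD : ybar ∈ D) (hybar : ∀ y ∈ D, f ybar y ≥ 0)
    (yhat : EuclideanSpace ℝ (Fin n)) (hyhat : yhat ∈ D)
    (w₀ : EuclideanSpace ℝ (Fin n)) (hw₀D : w₀ ∈ D)
    (hw₀ : ∀ w ∈ D, f yhat w₀ + L / 2 * ‖w₀ - yhat‖ ^ 2 ≤ f yhat w + L / 2 * ‖w - yhat‖ ^ 2) :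
    μ / (2 * L) * ‖yhat - ybar‖ ≤ ‖yhat - w₀‖ ∧ ‖yhat - w₀‖ ≤ 2 * ‖yhat - ybar‖ := by
  have hyA : yhat ∈ A := hDsub hyhat
  have hbA : ybar ∈ A := hDsub hybarD
  have hwA : w₀ ∈ A := hDsub hw₀D
  set s := ‖yhat - ybar‖ with hsdef
  set t := ‖yhat - w₀‖ with htdef
  set u := ‖ybar - w₀‖ with hudef
  have hs0 : 0 ≤ s := norm_nonneg _
  have ht0 : 0 ≤ t := norm_nonneg _
  have hu0 : 0 ≤ u := norm_nonneg _
  clear_value s t u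
  -- strong convexity of the prox objective gives an improved optimality inequality
  have hstar : f yhat w₀ + L / 2 * ‖w₀ - yhat‖ ^ 2 + L / 2 * u ^ 2
      ≤ f yhat ybar + L / 2 * ‖ybar - yhat‖ ^ 2 := by
    have key : ∀ ε > (0:ℝ), f yhat w₀ + L / 2 * ‖w₀ - yhat‖ ^ 2 + L / 2 * u ^ 2
        ≤ f yhat ybar + L / 2 * ‖ybar - yhat‖ ^ 2 + ε := by
      intro ε hε
      set q : ℝ := u ^ 2 with hqdef
      have hq0 : 0 ≤ q := sq_nonneg _
      clear_value q
      set τ : ℝ := ε / (L / 2 * q + 2 * ε) with hτdef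
      have hden : 0 < L / 2 * q + 2 * ε := by positivity
      clear_value τ
      have hτ0 : 0 < τ := by rw [hτdef]; exact div_pos hε hden
      have hτ1 : τ < 1 := by
        rw [hτdef, div_lt_one hden]; nlinarith
      have hτq : L / 2 * τ * q ≤ ε := by
        have hle : L / 2 * q ≤ L / 2 * q + 2 * ε := by linarith
        calc L / 2 * τ * q = (L / 2 * q) * (ε / (L / 2 * q + 2 * ε)) := by
              rw [hτdef]; ring
          _ ≤ (L / 2 * q + 2 * ε) * (ε / (L / 2 * q + 2 * ε)) :=
              mul_le_mul_of_nonneg_right hle (by positivity)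
          _ = ε := by field_simp
      set wt := (1 - τ) • w₀ + τ • ybar with hwtdef
      clear_value wt
      have hwtD : wt ∈ D := by
        rw [hwtdef]; exact hDconv hw₀D hybarD (by linarith) hτ0.le (by ring)
      have hcv : f yhat wt ≤ (1 - τ) * f yhat w₀ + τ * f yhat ybar := by
        rw [hwtdef]
        exact (hcvx yhat hyA).2 hwA hbA (by linarith) hτ0.le (by ring)
      have hvec : wt - yhat = (1 - τ) • (w₀ - yhat) + τ • (ybar - yhat) := by
        rw [hwtdef]; module
      have habd : (w₀ - yhat) - (ybar - yhat) = w₀ - ybar := by abel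
      have hnorm : ‖wt - yhat‖ ^ 2
          = (1 - τ) * ‖w₀ - yhat‖ ^ 2 + τ * ‖ybar - yhat‖ ^ 2 - τ * (1 - τ) * q := by
        rw [hvec]
        have h1 := norm_add_sq_real ((1 - τ) • (w₀ - yhat)) (τ • (ybar - yhat))
        have h2 := norm_sub_sq_real (w₀ - yhat) (ybar - yhat)
        rw [habd] at h2
        rw [norm_smul, norm_smul, real_inner_smul_left, real_inner_smul_right,
          Real.norm_eq_abs, Real.norm_eq_abs, abs_of_nonneg hτ0.le,
          abs_of_nonneg (by linarith : (0:ℝ) ≤ 1 - τ)] at h1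
        have huq : q = ‖w₀ - ybar‖ ^ 2 := by rw [hqdef, hudef, norm_sub_rev]
        rw [h1, huq]
        linear_combination (τ * (1 - τ)) * h2
      have hmin := hw₀ wt hwtD
      rw [hnorm] at hmin
      have hdivided : f yhat w₀ + L / 2 * ‖w₀ - yhat‖ ^ 2 + L / 2 * (1 - τ) * q
          ≤ f yhat ybar + L / 2 * ‖ybar - yhat‖ ^ 2 := by
        have h3 : τ * (f yhat w₀ + L / 2 * ‖w₀ - yhat‖ ^ 2 + L / 2 * (1 - τ) * q)
            ≤ τ * (f yhat ybar + L / 2 * ‖ybar - yhat‖ ^ 2) := by nlinarith [hcv, hmin]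
        exact le_of_mul_le_mul_left h3 hτ0
      nlinarith [hdivided]
    exact le_of_forall_pos_le_add key
  -- Lipschitz-type + monotonicity + EP solution
  have h1 := hlip ybar hbA yhat hyA w₀ hwA
  have h2 := hybar w₀ hw₀D
  have h3 := hsm yhat hyA ybar hbA
  have hst : ‖w₀ - yhat‖ = t := by rw [htdef, norm_sub_rev]
  have hss : ‖ybar - yhat‖ = s := by rw [hsdef, norm_sub_rev]
  rw [hst, hss] at hstar
  rw [hst, ← hsdef] at h1
  rw [← hsdef] at h3
  -- triangle inequality : |s - t| ≤ u
  have htri1 : s ≤ t + u :=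
    calc s = ‖(yhat - w₀) + (w₀ - ybar)‖ := by rw [hsdef, sub_add_sub_cancel]
      _ ≤ ‖yhat - w₀‖ + ‖w₀ - ybar‖ := norm_add_le _ _
      _ = t + u := by rw [norm_sub_rev w₀ ybar, ← htdef, ← hudef]
  have htri2 : t ≤ s + u :=
    calc t = ‖(yhat - ybar) + (ybar - w₀)‖ := by rw [htdef, sub_add_sub_cancel]
      _ ≤ s + u := by rw [hsdef, hudef]; exact norm_add_le _ _
  have hsq : (s - t) ^ 2 ≤ u ^ 2 := by
    nlinarith [mul_nonneg (by linarith : (0:ℝ) ≤ t + u - s) (by linarith : (0:ℝ) ≤ s + u - t)]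
  have hcomb : μ * s ^ 2 - L * s * t + L / 2 * t ^ 2 + L / 2 * u ^ 2 ≤ L / 2 * s ^ 2 := by
    linarith [hstar, h1, h2, h3]
  clear hstar h1 h2 h3 hst hss htri1 htri2 hsdef htdef hudef
  clear hw₀ hybar hcvx hdiag hsm hlip hybarD hyhat hw₀D hDsub hDne hDcl hDconv hA hyA hbA hwA
  clear f D ybar yhat w₀ A
  have h4 : L / 2 * (s - t) ^ 2 ≤ L / 2 * u ^ 2 :=
    mul_le_mul_of_nonneg_left hsq (by positivity)
  have key : μ * s ^ 2 ≤ 2 * L * s * t - L * t ^ 2 := by nlinarith [hcomb, h4]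
  constructor
  · rw [div_mul_eq_mul_div, div_le_iff₀ (by positivity)]
    rcases eq_or_lt_of_le hs0 with h | h
    · nlinarith [mul_nonneg (mul_nonneg hL.le ht0) ht0]
    · nlinarith [key, mul_nonneg hL.le (sq_nonneg t), h]
  · rcases eq_or_lt_of_le ht0 with h | h
    · nlinarith
    · nlinarith [key, mul_pos hL h, mul_nonneg hμ.le (sq_nonneg s)]
end

section
/- Let f : A × A → ℝ be μ-strongly monotone and L-Lipschitz-type continuous with f(x,·) convex continuous, f(·,y) upper semicontinuous, f(x,x)=0. Let D ⊆ A be nonempty closed convex, ȳ the unique solution of EP(f,D), ŷ ∈ D and w₀ = argmin_{w∈D}{f(ŷ,w)+(L/2)‖w-ŷ‖²}. Define g(w₀) = sup_{z∈D}{f(z,w₀) + (μ/2)‖z-w₀‖²}. Then g(w₀) ≤ (8L²/μ)‖ŷ - ȳ‖². -/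
set_option maxHeartbeats 1000000 in
theorem stmt_10 {n : ℕ} (A : Set (EuclideanSpace ℝ (Fin n))) (hA : Convex ℝ A)
    (f : EuclideanSpace ℝ (Fin n) → EuclideanSpace ℝ (Fin n) → ℝ)
    (μ L : ℝ) (hμ : 0 < μ) (hL : 0 < L)
    (husc : ∀ y ∈ A, UpperSemicontinuousOn (fun x => f x y) A)
    (hcont : ∀ x ∈ A, ContinuousOn (f x) A)
    (hcvx : ∀ x ∈ A, ConvexOn ℝ A (f x))
    (hdiag : ∀ x ∈ A, f x x = 0)
    (hsm : ∀ x ∈ A, ∀ y ∈ A, f x y + f y x ≤ -μ * ‖x - y‖ ^ 2)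
    (hlip : ∀ x ∈ A, ∀ y ∈ A, ∀ z ∈ A,
      f x y + f y z ≥ f x z - L * ‖y - x‖ * ‖z - y‖)
    (D : Set (EuclideanSpace ℝ (Fin n))) (hDsub : D ⊆ A)
    (hDne : D.Nonempty) (hDcl : IsClosed D) (hDconv : Convex ℝ D)
    (ybar : EuclideanSpace ℝ (Fin n)) (hybarD : ybar ∈ D) (hybar : ∀ y ∈ D, f ybar y ≥ 0)
    (yhat : EuclideanSpace ℝ (Fin n)) (hyhat : yhat ∈ D)
    (w₀ : EuclideanSpace ℝ (Fin n)) (hw₀D : w₀ ∈ D)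
    (hw₀ : ∀ w ∈ D, f yhat w₀ + L / 2 * ‖w₀ - yhat‖ ^ 2 ≤ f yhat w + L / 2 * ‖w - yhat‖ ^ 2) :
    ∀ z ∈ D, f z w₀ + μ / 2 * ‖z - w₀‖ ^ 2 ≤ 8 * L ^ 2 / μ * ‖yhat - ybar‖ ^ 2 := by
  have hyA : yhat ∈ A := hDsub hyhat
  have hwA : w₀ ∈ A := hDsub hw₀D
  have hbA : ybar ∈ A := hDsub hybarD
  -- strong convexity of the prox subproblem: quadratic growth at the minimizer w₀
  have hSC : ∀ w ∈ D, f yhat w₀ + L / 2 * ‖w₀ - yhat‖ ^ 2 + L / 2 * ‖w - w₀‖ ^ 2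
      ≤ f yhat w + L / 2 * ‖w - yhat‖ ^ 2 := by
    intro w hw
    have hVI : 0 ≤ f yhat w - f yhat w₀ + L * (inner ℝ (w₀ - yhat) (w - w₀) : ℝ) := by
      by_contra hneg
      push_neg at hneg
      set C : ℝ := f yhat w - f yhat w₀ + L * (inner ℝ (w₀ - yhat) (w - w₀) : ℝ) with hCdef
      have hc0 : (0:ℝ) ≤ ‖w - w₀‖ ^ 2 := sq_nonneg _
      have hLc : 0 < L * ‖w - w₀‖ ^ 2 + 1 := by positivity
      set t : ℝ := min (1/2) (-C / (L * ‖w - w₀‖ ^ 2 + 1)) with htdef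
      have ht0 : 0 < t := lt_min (by norm_num) (div_pos (neg_pos.2 hneg) hLc)
      have ht1 : t < 1 := lt_of_le_of_lt (min_le_left _ _) (by norm_num)
      have hmem : (1 - t) • w₀ + t • w ∈ D :=
        hDconv hw₀D hw (by linarith) ht0.le (by ring)
      have hmin := hw₀ _ hmem
      have hconv := (hcvx yhat hyA).2 hwA (hDsub hw)
        (by linarith : (0:ℝ) ≤ 1 - t) ht0.le (by ring)
      simp only [smul_eq_mul] at hconv
      have hpt : (1 - t) • w₀ + t • w - yhat = (w₀ - yhat) + t • (w - w₀) := by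
        rw [sub_smul, one_smul, smul_sub]; abel
      have hnorm : ‖(1 - t) • w₀ + t • w - yhat‖ ^ 2
          = ‖w₀ - yhat‖ ^ 2 + 2 * (t * (inner ℝ (w₀ - yhat) (w - w₀) : ℝ))
            + t ^ 2 * ‖w - w₀‖ ^ 2 := by
        rw [hpt, norm_add_sq_real, real_inner_smul_right, norm_smul,
          Real.norm_eq_abs, mul_pow, sq_abs]
      rw [hnorm] at hmin
      have hdiv : 0 ≤ t * (C + L / 2 * t * ‖w - w₀‖ ^ 2) := by
        rw [hCdef]; nlinarith [hmin, hconv]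
      have h2 : 0 ≤ C + L / 2 * t * ‖w - w₀‖ ^ 2 := by
        by_contra h3
        push_neg at h3
        nlinarith [mul_pos ht0 (neg_pos.2 h3)]
      have htle : t ≤ -C / (L * ‖w - w₀‖ ^ 2 + 1) := min_le_right _ _
      have htc : t * (L * ‖w - w₀‖ ^ 2 + 1) ≤ -C := (le_div_iff₀ hLc).mp htle
      nlinarith [mul_nonneg (mul_nonneg ht0.le hL.le) hc0]
    have hpt2 : w - yhat = (w₀ - yhat) + (w - w₀) := by abel
    have hnorm2 : ‖w - yhat‖ ^ 2 = ‖w₀ - yhat‖ ^ 2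
        + 2 * (inner ℝ (w₀ - yhat) (w - w₀) : ℝ) + ‖w - w₀‖ ^ 2 := by
      rw [hpt2, norm_add_sq_real]
    rw [hnorm2]
    linarith [hVI]
  intro z hz
  have hzA : z ∈ A := hDsub hz
  rcases eq_or_ne z w₀ with rfl | hne
  · rw [hdiag z hzA, sub_self, norm_zero]
    have hrhs : (0:ℝ) ≤ 8 * L ^ 2 / μ * ‖yhat - ybar‖ ^ 2 := by positivity
    nlinarith [hrhs]
  · -- μ ≤ L
    have hT : 0 < ‖z - w₀‖ := by
      rw [norm_pos_iff]
      exact sub_ne_zero.mpr hne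
    have hlz := hlip z hzA w₀ hwA z hzA
    rw [hdiag z hzA, norm_sub_rev w₀ z] at hlz
    have hsz := hsm z hzA w₀ hwA
    have hμL : μ ≤ L := by nlinarith [mul_pos hT hT]
    -- Step I : ‖w₀ - yhat‖² ≤ 4 ‖yhat - ybar‖²
    have e1 : ‖w₀ - ybar‖ = ‖ybar - w₀‖ := norm_sub_rev _ _
    have e2 : ‖ybar - yhat‖ = ‖yhat - ybar‖ := norm_sub_rev _ _
    have e4 : ‖yhat - w₀‖ = ‖w₀ - yhat‖ := norm_sub_rev _ _
    have tri1 : ‖w₀ - yhat‖ ≤ ‖ybar - w₀‖ + ‖yhat - ybar‖ := by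
      have := dist_triangle w₀ ybar yhat
      simp only [dist_eq_norm] at this
      linarith [e1, e2]
    have tri2 : ‖yhat - ybar‖ ≤ ‖w₀ - yhat‖ + ‖ybar - w₀‖ := by
      have := dist_triangle yhat w₀ ybar
      simp only [dist_eq_norm] at this
      linarith [e1, e4]
    have hsc2 := hSC ybar hybarD
    rw [e2] at hsc2
    have h6 := hsm yhat hyA ybar hbA
    have h8 := hlip ybar hbA yhat hyA w₀ hwA
    have h9 := hybar w₀ hw₀D
    have hRw : L / 2 * ‖w₀ - yhat‖ ^ 2 + L / 2 * ‖ybar - w₀‖ ^ 2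
        ≤ L * ‖yhat - ybar‖ * ‖w₀ - yhat‖ + (L / 2) * ‖yhat - ybar‖ ^ 2 := by
      have hμd : 0 ≤ μ * ‖yhat - ybar‖ ^ 2 := mul_nonneg hμ.le (sq_nonneg _)
      linarith [hsc2, h6, h8, h9]
    have hB2 : (‖w₀ - yhat‖ - ‖yhat - ybar‖) ^ 2 ≤ ‖ybar - w₀‖ ^ 2 := by
      nlinarith [mul_nonneg (by linarith : (0:ℝ) ≤ ‖ybar - w₀‖ + ‖yhat - ybar‖ - ‖w₀ - yhat‖)
        (by linarith : (0:ℝ) ≤ ‖ybar - w₀‖ + ‖w₀ - yhat‖ - ‖yhat - ybar‖)]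
    have hLR : L * ‖w₀ - yhat‖ ^ 2 ≤ 2 * L * (‖yhat - ybar‖ * ‖w₀ - yhat‖) := by
      have := mul_le_mul_of_nonneg_left hB2 hL.le
      nlinarith [hRw]
    have hR2 : ‖w₀ - yhat‖ ^ 2 ≤ 4 * ‖yhat - ybar‖ ^ 2 := by
      have hfin : L * ‖w₀ - yhat‖ ^ 2 ≤ L * (4 * ‖yhat - ybar‖ ^ 2) := by
        nlinarith [hLR, mul_nonneg hL.le (sq_nonneg (‖w₀ - yhat‖ - 2 * ‖yhat - ybar‖))]
      exact (mul_le_mul_iff_right₀ hL).mp hfin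
    -- Step II : main estimate
    have triA : ‖z - yhat‖ ≤ ‖z - w₀‖ + ‖w₀ - yhat‖ := by
      have := dist_triangle z w₀ yhat
      simp only [dist_eq_norm] at this
      linarith
    have triB : ‖w₀ - yhat‖ ≤ ‖z - w₀‖ + ‖z - yhat‖ := by
      have := dist_triangle w₀ z yhat
      simp only [dist_eq_norm, norm_sub_rev w₀ z] at this
      linarith
    have h1 := hSC z hz
    have h3 := hsm z hzA yhat hyA
    have h4 := hlip z hzA yhat hyA w₀ hwA
    rw [norm_sub_rev yhat z] at h4
    have h5 : f z w₀ + μ / 2 * ‖z - w₀‖ ^ 2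
        ≤ -(L / 2) * ‖w₀ - yhat‖ ^ 2 + (L / 2 - μ) * ‖z - yhat‖ ^ 2
          + L * (‖z - yhat‖ * ‖w₀ - yhat‖) + (μ / 2 - L / 2) * ‖z - w₀‖ ^ 2 := by
      nlinarith [h1, h3, h4]
    have h6ineq : 0 ≤ (L - μ) * ((‖z - w₀‖ + ‖w₀ - yhat‖ - ‖z - yhat‖)
        * (‖z - w₀‖ + ‖z - yhat‖ - ‖w₀ - yhat‖)) :=
      mul_nonneg (by linarith)
        (mul_nonneg (by linarith) (by linarith))
    have hA : μ * (f z w₀ + μ / 2 * ‖z - w₀‖ ^ 2)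
        ≤ μ * ((μ - 2 * L) / 2 * ‖w₀ - yhat‖ ^ 2 - μ / 2 * ‖z - yhat‖ ^ 2
          + (2 * L - μ) * (‖z - yhat‖ * ‖w₀ - yhat‖)) := by
      nlinarith [mul_le_mul_of_nonneg_left h5 hμ.le, mul_nonneg hμ.le h6ineq]
    have hB : μ * ((μ - 2 * L) / 2 * ‖w₀ - yhat‖ ^ 2 - μ / 2 * ‖z - yhat‖ ^ 2
          + (2 * L - μ) * (‖z - yhat‖ * ‖w₀ - yhat‖))
        ≤ (2 * L - μ) * (L - μ) * ‖w₀ - yhat‖ ^ 2 := by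
      nlinarith [sq_nonneg (μ * ‖z - yhat‖ - (2 * L - μ) * ‖w₀ - yhat‖)]
    have hC : (2 * L - μ) * (L - μ) * ‖w₀ - yhat‖ ^ 2 ≤ 8 * L ^ 2 * ‖yhat - ybar‖ ^ 2 := by
      have h3L : (0:ℝ) ≤ 3 * L - μ := by linarith
      nlinarith [mul_nonneg (mul_nonneg hμ.le h3L) (sq_nonneg ‖w₀ - yhat‖),
        mul_le_mul_of_nonneg_left hR2 (by positivity : (0:ℝ) ≤ 2 * L ^ 2)]
    have hgoal : 8 * L ^ 2 / μ * ‖yhat - ybar‖ ^ 2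
        = 8 * L ^ 2 * ‖yhat - ybar‖ ^ 2 / μ := by ring
    rw [hgoal, le_div_iff₀ hμ]
    linarith [hA, hB, hC]
end

section
/- Let F : A → ℝⁿ be μ-strongly monotone and L-Lipschitz, K : C ⇉ ℝⁿ with nonempty closed convex values such that ‖P_{K(u)}(z) - P_{K(v)}(z)‖ ≤ α‖u-v‖ for all u,v ∈ C, z ∈ ℝⁿ, and let T : C → ℝⁿ be a selection satisfying T(x) ∈ K(x) and ⟨F(T(x)), z - T(x)⟩ ≥ 0 for all z ∈ K(x). Then T is (αL/μ)-Lipschitz on C: ‖T(x₁) - T(x₂)‖ ≤ (αL/μ)‖x₁ - x₂‖. -/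
open Set

/-- Uniqueness of the nearest point in a convex set. -/
lemma proj_unique' {n : ℕ} {K : Set (EuclideanSpace ℝ (Fin n))} (hconv : Convex ℝ K)
    {z a b : EuclideanSpace ℝ (Fin n)} (ha : a ∈ K) (hb : b ∈ K)
    (h1 : ∀ x ∈ K, ‖z - a‖ ≤ ‖z - x‖) (h2 : ∀ x ∈ K, ‖z - b‖ ≤ ‖z - x‖) : a = b := by
  have hm : (1/2 : ℝ) • a + (1/2 : ℝ) • b ∈ K :=
    hconv ha hb (by norm_num) (by norm_num) (by norm_num)
  have h3 : ‖z - a‖ ≤ ‖z - ((1/2:ℝ) • a + (1/2:ℝ) • b)‖ := h1 _ hm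
  have h4 : ‖z - b‖ ≤ ‖z - ((1/2:ℝ) • a + (1/2:ℝ) • b)‖ := h2 _ hm
  have hpar := parallelogram_law_with_norm ℝ (z - a) (z - b)
  have he1 : (z - a) + (z - b) = (2:ℝ) • (z - ((1/2:ℝ) • a + (1/2:ℝ) • b)) := by
    module
  have he2 : (z - a) - (z - b) = b - a := by abel
  rw [he1, he2, norm_smul] at hpar
  have h2n : ‖(2:ℝ)‖ = 2 := by norm_num
  rw [h2n] at hpar
  have hba : ‖b - a‖ = 0 := by
    nlinarith [norm_nonneg (b - a), norm_nonneg (z - a), norm_nonneg (z - b),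
      norm_nonneg (z - ((1/2:ℝ) • a + (1/2:ℝ) • b))]
  have : b - a = 0 := by rwa [norm_eq_zero] at hba
  linear_combination (norm := module) -this

/-- Variational characterization of the nearest point. -/
lemma proj_vi' {n : ℕ} {K : Set (EuclideanSpace ℝ (Fin n))} (hconv : Convex ℝ K)
    {z w : EuclideanSpace ℝ (Fin n)} (hw : w ∈ K)
    (hmin : ∀ x ∈ K, ‖z - w‖ ≤ ‖z - x‖) :
    ∀ v ∈ K, (inner ℝ (z - w) (v - w) : ℝ) ≤ 0 := by
  haveI : Nonempty K := ⟨⟨w, hw⟩⟩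
  have hbdd : BddBelow (Set.range fun x : K => ‖z - (x : EuclideanSpace ℝ (Fin n))‖) := by
    refine ⟨0, ?_⟩
    rintro r ⟨x, rfl⟩
    exact norm_nonneg _
  have h : ‖z - w‖ = ⨅ x : K, ‖z - (x : EuclideanSpace ℝ (Fin n))‖ := by
    apply le_antisymm
    · exact le_ciInf fun x => hmin x x.2
    · exact ciInf_le hbdd ⟨w, hw⟩
  exact (norm_eq_iInf_iff_real_inner_le_zero hconv hw).mp h

lemma limit_arith (μ L c d : ℝ) (hμ : 0 < μ) (hd : 0 < d) (hc : 0 ≤ c)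
    (h : ∀ t : ℝ, 0 < t → μ * d ^ 2 ≤ L * c * d + (1 / t) * (c * (d + c))) :
    μ * d ≤ L * c := by
  have h2 : μ * d ^ 2 ≤ L * c * d := by
    apply le_of_forall_pos_le_add
    intro ε hε
    have ht : 0 < (c * (d + c) + 1) / ε := by positivity
    have hk := h _ ht
    have h9 : (1 / ((c * (d + c) + 1) / ε)) * (c * (d + c)) ≤ ε := by
      rw [one_div, inv_div, div_mul_eq_mul_div, div_le_iff₀ (by positivity)]
      nlinarith
    linarith
  nlinarith [hd]

theorem stmt_12 {n : ℕ} (C : Set (EuclideanSpace ℝ (Fin n)))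
    (K : EuclideanSpace ℝ (Fin n) → Set (EuclideanSpace ℝ (Fin n)))
    (hK : ∀ x ∈ C, (K x).Nonempty ∧ IsClosed (K x) ∧ Convex ℝ (K x))
    (A : Set (EuclideanSpace ℝ (Fin n)))
    (hA : A = closure (convexHull ℝ (⋃ x ∈ C, K x)))
    (F : EuclideanSpace ℝ (Fin n) → EuclideanSpace ℝ (Fin n))
    (μ L α : ℝ) (hμ : 0 < μ) (hL : 0 < L) (hα : 0 < α)
    (hFsm : ∀ x ∈ A, ∀ y ∈ A, (inner ℝ (F x - F y) (x - y) : ℝ) ≥ μ * ‖x - y‖ ^ 2)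
    (hFlip : ∀ x ∈ A, ∀ y ∈ A, ‖F x - F y‖ ≤ L * ‖x - y‖)
    (PK : EuclideanSpace ℝ (Fin n) → EuclideanSpace ℝ (Fin n) → EuclideanSpace ℝ (Fin n))
    (hPK : ∀ u ∈ C, ∀ z, PK u z ∈ K u ∧ ∀ w ∈ K u, ‖z - PK u z‖ ≤ ‖z - w‖)
    (hPKlip : ∀ u ∈ C, ∀ v ∈ C, ∀ z, ‖PK u z - PK v z‖ ≤ α * ‖u - v‖)
    (T : EuclideanSpace ℝ (Fin n) → EuclideanSpace ℝ (Fin n))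
    (hTsel : ∀ x ∈ C, T x ∈ K x ∧ ∀ z ∈ K x, (inner ℝ (F (T x)) (z - T x) : ℝ) ≥ 0) :
    ∀ x₁ ∈ C, ∀ x₂ ∈ C, ‖T x₁ - T x₂‖ ≤ α * L / μ * ‖x₁ - x₂‖ := by
  intro x₁ hx₁ x₂ hx₂
  obtain ⟨hK1ne, hK1cl, hK1cv⟩ := hK x₁ hx₁
  obtain ⟨hK2ne, hK2cl, hK2cv⟩ := hK x₂ hx₂
  obtain ⟨hT1K, hT1vi⟩ := hTsel x₁ hx₁
  obtain ⟨hT2K, hT2vi⟩ := hTsel x₂ hx₂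
  set δ := ‖x₁ - x₂‖ with hδ
  have hδ0 : 0 ≤ δ := norm_nonneg _
  have hmemA : ∀ x ∈ C, ∀ y ∈ K x, y ∈ A := by
    intro x hx y hy
    rw [hA]
    exact subset_closure (subset_convexHull ℝ _ (Set.mem_biUnion hx hy))
  have hT1A : T x₁ ∈ A := hmemA x₁ hx₁ _ hT1K
  have hT2A : T x₂ ∈ A := hmemA x₂ hx₂ _ hT2K
  by_cases hd0 : T x₁ = T x₂
  · rw [hd0, sub_self, norm_zero]; positivity
  have hdpos : 0 < ‖T x₁ - T x₂‖ := by
    rw [norm_pos_iff, sub_ne_zero]; exact hd0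
  set d := ‖T x₁ - T x₂‖ with hdd
  -- Key estimate for every t > 0
  have key : ∀ t : ℝ, 0 < t →
      μ * d ^ 2 ≤ L * (α * δ) * d + (1 / t) * (α * δ * (d + α * δ)) := by
    intro t ht
    set F₂ := F (T x₂) with hF₂
    set z := T x₂ - t • F₂ with hz
    set w := PK x₁ z with hw
    have hwK : w ∈ K x₁ := (hPK x₁ hx₁ z).1
    -- T x₂ minimizes distance to z over K x₂
    have hT2min : ∀ v ∈ K x₂, ‖z - T x₂‖ ≤ ‖z - v‖ := by
      intro v hv
      have hvi := hT2vi v hv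
      have h1 : ‖z - T x₂‖ = t * ‖F₂‖ := by
        have : z - T x₂ = -(t • F₂) := by rw [hz]; abel
        rw [this, norm_neg, norm_smul, Real.norm_eq_abs, abs_of_pos ht]
      have hzv : z - v = (T x₂ - v) - t • F₂ := by rw [hz]; abel
      have h2 : ‖z - v‖ ^ 2
          = ‖T x₂ - v‖ ^ 2 - 2 * (t * (inner ℝ (T x₂ - v) F₂ : ℝ)) + t ^ 2 * ‖F₂‖ ^ 2 := by
        rw [hzv, norm_sub_sq_real, real_inner_smul_right, norm_smul, Real.norm_eq_abs,
          abs_of_pos ht, mul_pow]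
      have h3 : (inner ℝ (T x₂ - v) F₂ : ℝ) = -(inner ℝ F₂ (v - T x₂) : ℝ) := by
        rw [real_inner_comm, ← inner_neg_right]
        congr 1; abel
      rw [h3] at h2
      have h4 : ‖z - T x₂‖ ^ 2 ≤ ‖z - v‖ ^ 2 := by
        rw [h1, h2]
        nlinarith [norm_nonneg (T x₂ - v), mul_nonneg ht.le hvi]
      nlinarith [norm_nonneg (z - T x₂), norm_nonneg (z - v)]
    -- hence PK x₂ z = T x₂
    have heq : PK x₂ z = T x₂ :=
      proj_unique' hK2cv (hPK x₂ hx₂ z).1 hT2K (hPK x₂ hx₂ z).2 hT2min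
    have hwT2 : ‖w - T x₂‖ ≤ α * δ := by
      have := hPKlip x₁ hx₁ x₂ hx₂ z
      rwa [heq] at this
    -- projection VI on K x₁ at T x₁
    have hvi1 : (inner ℝ (z - w) (T x₁ - w) : ℝ) ≤ 0 :=
      proj_vi' hK1cv hwK (fun x hx => (hPK x₁ hx₁ z).2 x hx) _ hT1K
    have hzw : z - w = (T x₂ - w) - t • F₂ := by rw [hz]; abel
    have hvi1' : (inner ℝ (T x₂ - w) (T x₁ - w) : ℝ)
        - t * (inner ℝ F₂ (T x₁ - w) : ℝ) ≤ 0 := by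
      have : (inner ℝ ((T x₂ - w) - t • F₂) (T x₁ - w) : ℝ)
          = (inner ℝ (T x₂ - w) (T x₁ - w) : ℝ) - t * (inner ℝ F₂ (T x₁ - w) : ℝ) := by
        rw [inner_sub_left, real_inner_smul_left]
      rw [← this, ← hzw]; exact hvi1
    have hip : -(‖T x₂ - w‖ * ‖T x₁ - w‖) ≤ (inner ℝ (T x₂ - w) (T x₁ - w) : ℝ) := by
      have := abs_real_inner_le_norm (T x₂ - w) (T x₁ - w)
      have := neg_abs_le (inner ℝ (T x₂ - w) (T x₁ - w) : ℝ)
      linarith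
    have hFw : (inner ℝ F₂ (w - T x₁) : ℝ) ≤ (1 / t) * (‖T x₂ - w‖ * ‖T x₁ - w‖) := by
      have h5 : (inner ℝ F₂ (w - T x₁) : ℝ) = -(inner ℝ F₂ (T x₁ - w) : ℝ) := by
        rw [← inner_neg_right]; congr 1; abel
      have h6 : -(‖T x₂ - w‖ * ‖T x₁ - w‖) ≤ t * (inner ℝ F₂ (T x₁ - w) : ℝ) := by
        linarith
      rw [h5, one_div, inv_mul_eq_div]
      rw [le_div_iff₀ ht]
      nlinarith [h6]
    have hT1w : ‖T x₁ - w‖ ≤ d + α * δ := by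
      have h7 : T x₁ - w = (T x₁ - T x₂) + (T x₂ - w) := by abel
      calc ‖T x₁ - w‖ = ‖(T x₁ - T x₂) + (T x₂ - w)‖ := by rw [← h7]
        _ ≤ ‖T x₁ - T x₂‖ + ‖T x₂ - w‖ := norm_add_le _ _
        _ ≤ d + α * δ := by
            have : ‖T x₂ - w‖ = ‖w - T x₂‖ := (norm_sub_rev _ _)
            linarith [hwT2]
    -- main chain
    have hsm := hFsm _ hT1A _ hT2A
    have hlip := hFlip _ hT1A _ hT2A
    have h1 : (inner ℝ (F (T x₁)) (w - T x₁) : ℝ) ≥ 0 := hT1vi w hwK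
    have hid : (inner ℝ (F (T x₁) - F₂) (T x₁ - T x₂) : ℝ)
        = (inner ℝ (F (T x₁) - F₂) (w - T x₂) : ℝ)
          - (inner ℝ (F (T x₁)) (w - T x₁) : ℝ) + (inner ℝ F₂ (w - T x₁) : ℝ) := by
      simp only [inner_sub_left, inner_sub_right]
      ring
    have hCS : (inner ℝ (F (T x₁) - F₂) (w - T x₂) : ℝ) ≤ ‖F (T x₁) - F₂‖ * ‖w - T x₂‖ :=
      real_inner_le_norm _ _
    have hb1 : ‖F (T x₁) - F₂‖ * ‖w - T x₂‖ ≤ (L * d) * (α * δ) :=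
      mul_le_mul hlip hwT2 (norm_nonneg _) (by positivity)
    have hb2 : ‖T x₂ - w‖ * ‖T x₁ - w‖ ≤ (α * δ) * (d + α * δ) := by
      have h8 : ‖T x₂ - w‖ ≤ α * δ := by
        rw [norm_sub_rev]; exact hwT2
      exact mul_le_mul h8 hT1w (norm_nonneg _) (by positivity)
    have hb2' : (1 / t) * (‖T x₂ - w‖ * ‖T x₁ - w‖) ≤ (1 / t) * ((α * δ) * (d + α * δ)) := by
      apply mul_le_mul_of_nonneg_left hb2 (by positivity)
    have hsm' : μ * d ^ 2 ≤ (inner ℝ (F (T x₁) - F₂) (T x₁ - T x₂) : ℝ) := by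
      rw [hdd]; exact hsm
    linarith [hsm', hid, h1, hCS, hb1, hFw, hb2']
  have hmd : μ * d ≤ L * (α * δ) := limit_arith μ L (α * δ) d hμ hdpos (by positivity) key
  rw [div_mul_eq_mul_div, le_div_iff₀ hμ]
  nlinarith [hmd]
end
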